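/- arXiv:1103.1855 — 4 statements merged into one kernel-verified Lean document; each statement's English description precedes it below -/
import Mathlib

section
/- For any field K of characteristic different from 2 and n ≥ 2, every alternating bilinear form on M_n(K) invariant under simultaneous conjugation by GL_n(K) is zero. -/
/-!
On matrix units `E i j`, conjugation by an involutive diagonal matrix `diagonal d`
(`d q = ±1`) multiplies `β (E i j) (E k l)` by `d i * d j * d k * d l`. If some index occurs an odd number of times
among `i, j, k, l`, taking `d = -1` exactly there gives `β (E i j) (E k l) = -β (E i j) (E k l)`.
Otherwise the indices pair up so that the transposition `(i k)` exchanges `E i j` and `E k l`,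
and invariance together with skew-symmetry gives the same identity. As `2 ≠ 0`, `β` vanishes
on the standard basis.
-/

open Matrix

lemma exists_mul_self_eq_one_and_mul_eq_neg_one {M n : Type*} [Monoid M] [HasDistribNeg M]
    [DecidableEq n] {i j k l : n} (h : Equiv.swap i k j ≠ l) :
    ∃ d : n → M, d * d = 1 ∧ d i * d j * (d k * d l) = -1 := by
  have hsq (p : n) : (Pi.mulSingle p (-1) : n → M) * Pi.mulSingle p (-1) = 1 := by
    rw [← Pi.mulSingle_mul, neg_mul_neg, mul_one, Pi.mulSingle_one]
  by_cases hji : j = i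
  · subst j
    by_cases hli : l = i
    · subst l
      have hik : i ≠ k := by rintro rfl; simp at h
      exact ⟨Pi.mulSingle k (-1), hsq k, by simp [hik]⟩
    · have hkl : k ≠ l := by rintro rfl; simp at h
      exact ⟨Pi.mulSingle l (-1), hsq l, by simp [Ne.symm hli, hkl]⟩
  · by_cases hjk : j = k
    · subst k
      have hli : l ≠ i := by rintro rfl; simp at h
      exact ⟨Pi.mulSingle i (-1), hsq i, by simp [hji, hli]⟩
    · rw [Equiv.swap_apply_of_ne_of_ne hji hjk] at h
      exact ⟨Pi.mulSingle j (-1), hsq j, by simp [Ne.symm hji, Ne.symm hjk, Ne.symm h]⟩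

namespace Matrix

variable {R n : Type*} [Fintype n] [DecidableEq n]

lemma swap_mul_single_mul_swap [Semiring R] (i j a b : n) (c : R) :
    swap R i j * single a b c * swap R i j =
      single (Equiv.swap i j a) (Equiv.swap i j b) c := by
  simp [swap, PEquiv.toMatrix_toPEquiv_mul, PEquiv.mul_toMatrix_toPEquiv]

lemma diagonal_mul_single_mul_diagonal [Semiring R] (d e : n → R) (a b : n) (c : R) :
    diagonal d * single a b c * diagonal e = single a b (d a * c * e b) := by
  ext i j
  by_cases h : a = i ∧ b = j
  · obtain ⟨rfl, rfl⟩ := h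
    simp
  · simp [h]

section BilinearForm

variable [CommRing R] [IsDomain R] {β : Matrix n n R →ₗ[R] Matrix n n R →ₗ[R] R}

lemma apply_single_single_eq_zero_of_mul_eq_neg_one (hR : ringChar R ≠ 2)
    (hconj : ∀ g, g * g = 1 → ∀ A B, β (g * A * g) (g * B * g) = β A B) {i j k l : n}
    {d : n → R} (hd : d * d = 1) (hd_odd : d i * d j * (d k * d l) = -1) :
    β (single i j 1) (single k l 1) = 0 := by
  have single_eq_smul (a b : n) (c : R) : single a b c = c • single a b 1 := by
    rw [smul_single, smul_eq_mul, mul_one]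
  have hd' : diagonal d * diagonal d = 1 := by
    rw [diagonal_mul_diagonal, ← Pi.mul_def, hd]
    exact diagonal_one
  have h := hconj (diagonal d) hd' (single i j 1) (single k l 1)
  rw [diagonal_mul_single_mul_diagonal, diagonal_mul_single_mul_diagonal, mul_one, mul_one,
    single_eq_smul i j, single_eq_smul k l, map_smul, map_smul, LinearMap.smul_apply,
    smul_eq_mul, smul_eq_mul] at h
  rw [← Ring.eq_self_iff_eq_zero_of_char_ne_two hR]
  linear_combination h - β (single i j 1) (single k l 1) * hd_odd

lemma apply_single_single_eq_zero_of_swap_apply_eq (hR : ringChar R ≠ 2) (hβ : β.IsAlt)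
    (hconj : ∀ g, g * g = 1 → ∀ A B, β (g * A * g) (g * B * g) = β A B) {i j k l : n}
    (h : Equiv.swap i k j = l) :
    β (single i j 1) (single k l 1) = 0 := by
  have hl : Equiv.swap i k l = j := by rw [← h, Equiv.swap_apply_self]
  have h' := hconj _ (swap_mul_self i k) (single i j (1 : R)) (single k l 1)
  simp only [swap_mul_single_mul_swap, Equiv.swap_apply_left, Equiv.swap_apply_right, h, hl] at h'
  rw [← Ring.eq_self_iff_eq_zero_of_char_ne_two hR, hβ.neg, h']

end BilinearForm

end Matrix

theorem invariant_alternating_forms_trivial_general (K : Type*) [Field K] (hchar : ringChar K ≠ 2)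
    (n : ℕ)
    (β : Matrix (Fin n) (Fin n) K →ₗ[K] Matrix (Fin n) (Fin n) K →ₗ[K] K)
    (hinv : ∀ g : Matrix (Fin n) (Fin n) K, IsUnit g →
      ∀ A B, β (g * A * g⁻¹) (g * B * g⁻¹) = β A B)
    (halt : ∀ A, β A A = 0) :
    β = 0 := by
  have hinvol : ∀ g, g * g = 1 → ∀ A B, β (g * A * g) (g * B * g) = β A B :=
    fun g hg A B => by simpa [inv_eq_left_inv hg] using hinv g ⟨⟨g, g, hg, hg⟩, rfl⟩ A B
  refine LinearMap.ext_basis (stdBasis K _ _) (stdBasis K _ _) fun ⟨i, j⟩ ⟨k, l⟩ => ?_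
  rw [stdBasis_eq_single, stdBasis_eq_single, LinearMap.zero_apply, LinearMap.zero_apply]
  by_cases h : Equiv.swap i k j = l
  · exact apply_single_single_eq_zero_of_swap_apply_eq hchar halt hinvol h
  · obtain ⟨d, hd, hd_odd⟩ := exists_mul_self_eq_one_and_mul_eq_neg_one (M := K) h
    exact apply_single_single_eq_zero_of_mul_eq_neg_one hchar hinvol hd hd_odd

/-- For a field `K` of characteristic `≠ 2` and `n ≥ 2`, every alternating bilinear
form on `M_n(K)` invariant under simultaneous conjugation by `GL_n(K)` is zero. -/
theorem invariant_alternating_forms_trivial (K : Type*) [Field K] (hchar : ringChar K ≠ 2)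
    (n : ℕ) (hn : 2 ≤ n)
    (β : Matrix (Fin n) (Fin n) K →ₗ[K] Matrix (Fin n) (Fin n) K →ₗ[K] K)
    (hinv : ∀ g : Matrix (Fin n) (Fin n) K, IsUnit g →
      ∀ A B, β (g * A * g⁻¹) (g * B * g⁻¹) = β A B)
    (halt : ∀ A, β A A = 0) :
    β = 0 :=
  invariant_alternating_forms_trivial_general K hchar n β hinv halt
end

section
/- The symmetric bilinear form on (Z/4Z)² with matrix ((2,1),(1,2)) is nondegenerate (its determinant 3 is a unit in Z/4Z), has trivial discriminant in (Z/4Z)*/((Z/4Z)*)², and represents a nonzero element of order 2 in the Witt ring W(Z/4Z). -/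
open Matrix

namespace WittZ4

/-- A nondegenerate symmetric bilinear form on a finitely generated free
`Z/4Z`-module, presented by its Gram matrix. -/
structure QF where
  m : ℕ
  G : Matrix (Fin m) (Fin m) (ZMod 4)
  symm : G.IsSymm
  nondeg : IsUnit G.det

/-- Isometry of forms: an invertible change of basis carrying one Gram matrix
to the other. -/
def Isometric (a b : QF) : Prop :=
  ∃ h : a.m = b.m, ∃ P : Matrix (Fin b.m) (Fin b.m) (ZMod 4), IsUnit P.det ∧
    Pᵀ * (Matrix.reindex (finCongr h) (finCongr h) a.G) * P = b.G

/-- Orthogonal (block-diagonal) sum of forms. -/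
def orthSum (a b : QF) : QF where
  m := a.m + b.m
  G := Matrix.reindex finSumFinEquiv finSumFinEquiv (Matrix.fromBlocks a.G 0 0 b.G)
  symm := by
    simp [Matrix.IsSymm, Matrix.transpose_reindex, Matrix.fromBlocks_transpose,
      a.symm.eq, b.symm.eq]
  nondeg := by
    rw [Matrix.det_reindex_self, Matrix.det_fromBlocks_zero₂₁]
    exact a.nondeg.mul b.nondeg

end WittZ4

namespace WittZ4

/-- The bilinear pairing associated to a form. -/
def pair (a : QF) (x y : Fin a.m → ZMod 4) : ZMod 4 :=
  dotProduct x (a.G.mulVec y)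

/-- The orthogonal complement of a submodule with respect to a form. -/
def orthCompl (a : QF) (N : Submodule (ZMod 4) (Fin a.m → ZMod 4)) :
    Submodule (ZMod 4) (Fin a.m → ZMod 4) where
  carrier := {x | ∀ y ∈ N, pair a x y = 0}
  zero_mem' := by intro y hy; simp [pair]
  add_mem' := by
    intro x z hx hz y hy
    have h1 : pair a x y = 0 := hx y hy
    have h2 : pair a z y = 0 := hz y hy
    simp only [pair] at h1 h2
    simp [pair, add_dotProduct, h1, h2]
  smul_mem' := by
    intro c x hx y hy
    have h1 : pair a x y = 0 := hx y hy
    simp only [pair] at h1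
    simp [pair, smul_dotProduct, h1]

/-- A form is split if the underlying module contains a direct summand `N`
with `N = N^⊥`. -/
def IsSplit (a : QF) : Prop :=
  ∃ N : Submodule (ZMod 4) (Fin a.m → ZMod 4),
    (∃ N', IsCompl N N') ∧ N = orthCompl a N

/-- Witt equivalence: two forms represent the same class in the Witt ring iff
they become isometric after adding split forms. -/
def WittEquiv (a b : QF) : Prop :=
  ∃ s t : QF, IsSplit s ∧ IsSplit t ∧ Isometric (orthSum a s) (orthSum b t)

/-- The zero form (on the zero module). -/
def zeroForm : QF :=
  ⟨0, 1, Matrix.isSymm_one, by simp⟩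

/-- The rank-one form `⟨1⟩`. -/
def oneForm : QF :=
  ⟨1, Matrix.of fun _ _ => (1 : ZMod 4), by ext i j; rfl,
    by simp [Matrix.det_fin_one]⟩

/-- The rank-one form `⟨-1⟩`. -/
def negOneForm : QF :=
  ⟨1, Matrix.of fun _ _ => (-1 : ZMod 4), by ext i j; rfl,
    by simp [Matrix.det_fin_one]⟩

/-- The rank-two form `ω` with Gram matrix `((2,1),(1,2))`. -/
def omegaForm : QF :=
  ⟨2, !![2, 1; 1, 2], by decide,
    IsUnit.of_mul_eq_one 3 (by decide)⟩

/-- `j` orthogonal copies of a form. -/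
def copies : ℕ → QF → QF
  | 0, _ => zeroForm
  | j + 1, a => orthSum (copies j a) a

end WittZ4

/-!
The invariant behind the theorem is the Gauss sum `τ(b) = ∑ₓ i ^ b(x, x)`, which is
multiplicative under orthogonal sums and invariant under isometries. If `N = N^⊥` has a
complement `N'`, summing first over `N` shows that `τ` of a split form is `|N|` times the number
of `n' ∈ N'` with `2 b(n', N) = 0` (for these `2n' ∈ N^⊥ ∩ N' = 0`, so `b(n', n') = 0`): a
positive integer. Since `τ(ω) = -8`, no relation `ω ⊕ s ≅ t` with `s`, `t` split is possible.
On the other hand `diag(1, -1)` is an isometry `ω ≅ -ω`, and the graph of an anti-isometry of `a`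
is a Lagrangian of `a ⊕ a`, so `ω ⊕ ω` is split.
-/

lemma Submodule.sum_eq_sum_sum_of_isCompl {R E S : Type*} [Ring R] [AddCommGroup E] [Module R E]
    [Fintype E] [AddCommMonoid S] {N N' : Submodule R E} [Fintype N] [Fintype N']
    (h : IsCompl N N') (f : E → S) : ∑ x, f x = ∑ n' : N', ∑ n : N, f (n + n') := by
  rw [← (Submodule.prodEquivOfIsCompl N N' h).toEquiv.sum_comp, Fintype.sum_prod_type,
    Finset.sum_comm]
  rfl

namespace WittZ4

section QuadraticGaussSum

variable {R S ι κ : Type*} [CommRing R] [Fintype R] [CommRing S]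
  [Fintype ι] [DecidableEq ι] [Fintype κ] [DecidableEq κ]

def quadraticGaussSum (ψ : AddChar R S) (G : Matrix ι ι R) : S :=
  ∑ x : ι → R, ψ (x ⬝ᵥ G *ᵥ x)

omit [Fintype R] [DecidableEq ι] [DecidableEq κ] in
lemma dotProduct_reindex_mulVec (e : ι ≃ κ) (G : Matrix ι ι R) (x y : κ → R) :
    x ⬝ᵥ reindex e e G *ᵥ y = (x ∘ e) ⬝ᵥ G *ᵥ (y ∘ e) := by
  rw [reindex_apply, submatrix_mulVec_equiv, dotProduct_comp_equiv_symm, Equiv.symm_symm]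

lemma quadraticGaussSum_reindex (ψ : AddChar R S) (e : ι ≃ κ) (G : Matrix ι ι R) :
    quadraticGaussSum ψ (reindex e e G) = quadraticGaussSum ψ G := by
  simp only [quadraticGaussSum, dotProduct_reindex_mulVec]
  exact Fintype.sum_equiv (e.symm.arrowCongr (.refl R)) _ _ fun _ => rfl

omit [Fintype R] [DecidableEq ι] [DecidableEq κ] in
lemma sumElim_dotProduct_fromBlocks_mulVec_sumElim (A : Matrix ι ι R) (B : Matrix κ κ R)
    (u v : ι → R) (u' v' : κ → R) :
    Sum.elim u u' ⬝ᵥ fromBlocks A 0 0 B *ᵥ Sum.elim v v' = u ⬝ᵥ A *ᵥ v + u' ⬝ᵥ B *ᵥ v' := by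
  simp [fromBlocks_mulVec]

lemma quadraticGaussSum_fromBlocks (ψ : AddChar R S) (A : Matrix ι ι R) (B : Matrix κ κ R) :
    quadraticGaussSum ψ (fromBlocks A 0 0 B) = quadraticGaussSum ψ A * quadraticGaussSum ψ B := by
  rw [quadraticGaussSum, quadraticGaussSum, quadraticGaussSum, Finset.sum_mul_sum,
    ← Fintype.sum_prod_type', ← (Equiv.sumArrowEquivProdArrow ι κ R).symm.sum_comp]
  refine Fintype.sum_congr _ _ fun x => ?_
  rw [← AddChar.map_add_eq_mul, ← sumElim_dotProduct_fromBlocks_mulVec_sumElim]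
  rfl

lemma quadraticGaussSum_transpose_mul_mul (ψ : AddChar R S) (A : Matrix ι ι R)
    {P : Matrix ι ι R} (hP : IsUnit P.det) :
    quadraticGaussSum ψ (Pᵀ * A * P) = quadraticGaussSum ψ A := by
  have hsurj : Function.Surjective P.mulVec :=
    mulVec_surjective_iff_isUnit.mpr ((isUnit_iff_isUnit_det P).mpr hP)
  have hbij : Function.Bijective P.mulVec :=
    ⟨Finite.injective_iff_surjective.mpr hsurj, hsurj⟩
  rw [quadraticGaussSum, quadraticGaussSum, ← hbij.sum_comp fun y => ψ (y ⬝ᵥ A *ᵥ y)]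
  refine Fintype.sum_congr _ _ fun x => ?_
  rw [← mulVec_mulVec, ← mulVec_mulVec, dotProduct_mulVec, vecMul_transpose]

lemma quadraticGaussSum_of_isEmpty [IsEmpty ι] (ψ : AddChar R S) (G : Matrix ι ι R) :
    quadraticGaussSum ψ G = 1 := by
  simp [quadraticGaussSum]

end QuadraticGaussSum

section Forms

variable {S : Type*} [CommRing S] (ψ : AddChar (ZMod 4) S)

lemma quadraticGaussSum_eq_of_isometric {a b : QF} (h : Isometric a b) :
    quadraticGaussSum ψ a.G = quadraticGaussSum ψ b.G := by
  obtain ⟨hm, P, hP, hG⟩ := h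
  rw [← hG, quadraticGaussSum_transpose_mul_mul ψ _ hP, quadraticGaussSum_reindex]

lemma quadraticGaussSum_orthSum (a b : QF) :
    quadraticGaussSum ψ (orthSum a b).G = quadraticGaussSum ψ a.G * quadraticGaussSum ψ b.G :=
  (quadraticGaussSum_reindex ψ _ _).trans (quadraticGaussSum_fromBlocks ψ _ _)

end Forms

lemma pair_orthSum_append (a b : QF) (u v : Fin a.m → ZMod 4) (u' v' : Fin b.m → ZMod 4) :
    pair (orthSum a b) (Fin.append u u') (Fin.append v v') = pair a u v + pair b u' v' := by
  change Fin.append u u' ⬝ᵥ reindex finSumFinEquiv finSumFinEquiv (fromBlocks a.G 0 0 b.G) *ᵥ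
    Fin.append v v' = _
  rw [dotProduct_reindex_mulVec, pair, pair, ← sumElim_dotProduct_fromBlocks_mulVec_sumElim]
  exact congrArg₂ (fun x y => x ⬝ᵥ fromBlocks a.G 0 0 b.G *ᵥ y) Fin.append_comp_sumElim
    Fin.append_comp_sumElim

lemma pair_eq_mulVec_dotProduct (a : QF) (x y : Fin a.m → ZMod 4) :
    pair a x y = a.G *ᵥ x ⬝ᵥ y := by
  rw [pair, dotProduct_mulVec, ← vecMul_transpose, a.symm.eq]

lemma pair_comm (a : QF) (x y : Fin a.m → ZMod 4) : pair a x y = pair a y x := by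
  rw [pair_eq_mulVec_dotProduct, dotProduct_comm, pair]

lemma pair_add_self (a : QF) (x y : Fin a.m → ZMod 4) :
    pair a (x + y) (x + y) = pair a x x + 2 * pair a y x + pair a y y := by
  have hcomm := pair_comm a x y
  unfold pair at hcomm ⊢
  simp only [mulVec_add, add_dotProduct, dotProduct_add, hcomm]
  ring

lemma pair_self_eq_zero_of_two_smul_eq_zero (a : QF) {x : Fin a.m → ZMod 4}
    (hx : (2 : ZMod 4) • x = 0) : pair a x x = 0 := by
  have halve : ∀ z : ZMod 4, 2 * z = 0 → 2 * ((z.val / 2 : ℕ) : ZMod 4) = z := by decide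
  obtain ⟨y, rfl⟩ : ∃ y, (2 : ZMod 4) • y = x :=
    ⟨fun i => ((x i).val / 2 : ℕ), funext fun i => halve _ (congrFun hx i)⟩
  simp only [pair, mulVec_smul, smul_dotProduct, dotProduct_smul, smul_eq_mul, ← mul_assoc]
  rw [show (2 * 2 : ZMod 4) = 0 by decide, zero_mul]

section Graph

variable (a : QF) (P : Matrix (Fin a.m) (Fin a.m) (ZMod 4))

def graph : Submodule (ZMod 4) (Fin (a.m + a.m) → ZMod 4) :=
  LinearMap.ker (LinearMap.funLeft (ZMod 4) (ZMod 4) (Fin.natAdd a.m) -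
    P.mulVecLin ∘ₗ LinearMap.funLeft (ZMod 4) (ZMod 4) (Fin.castAdd a.m))

def firstCoordsZero : Submodule (ZMod 4) (Fin (a.m + a.m) → ZMod 4) :=
  LinearMap.ker (LinearMap.funLeft (ZMod 4) (ZMod 4) (Fin.castAdd a.m))

variable {a P}

lemma append_mem_graph_iff {u v : Fin a.m → ZMod 4} :
    Fin.append u v ∈ graph a P ↔ v = P *ᵥ u := by
  rw [graph, LinearMap.mem_ker, LinearMap.sub_apply, sub_eq_zero]
  change (fun i => Fin.append u v (Fin.natAdd a.m i)) =
    P *ᵥ (fun i => Fin.append u v (Fin.castAdd a.m i)) ↔ _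
  simp only [Fin.append_left, Fin.append_right]

lemma append_mem_firstCoordsZero_iff {u v : Fin a.m → ZMod 4} :
    Fin.append u v ∈ firstCoordsZero a ↔ u = 0 := by
  rw [firstCoordsZero, LinearMap.mem_ker]
  change (fun i => Fin.append u v (Fin.castAdd a.m i)) = 0 ↔ _
  simp only [Fin.append_left]

lemma exists_append_eq (x : Fin (a.m + a.m) → ZMod 4) : ∃ u v, Fin.append u v = x :=
  ⟨_, _, Fin.append_castAdd_natAdd⟩

lemma isCompl_graph_firstCoordsZero : IsCompl (graph a P) (firstCoordsZero a) := by
  constructor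
  · rw [Submodule.disjoint_def]
    rintro x hxN hxN'
    obtain ⟨u, v, rfl⟩ := exists_append_eq x
    rw [append_mem_graph_iff] at hxN
    rw [append_mem_firstCoordsZero_iff] at hxN'
    subst hxN' hxN
    ext i
    refine Fin.addCases (fun i => ?_) (fun i => ?_) i <;>
      simp only [Fin.append_left, Fin.append_right, mulVec_zero, Pi.zero_apply]
  · rw [codisjoint_iff_le_sup]
    intro x _
    obtain ⟨u, v, rfl⟩ := exists_append_eq x
    refine Submodule.mem_sup.mpr ⟨Fin.append u (P *ᵥ u), append_mem_graph_iff.mpr rfl,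
      Fin.append 0 (v - P *ᵥ u), append_mem_firstCoordsZero_iff.mpr rfl, ?_⟩
    ext i
    refine Fin.addCases (fun i => ?_) (fun i => ?_) i <;>
      simp only [Pi.add_apply, Fin.append_left, Fin.append_right, Pi.zero_apply, Pi.sub_apply,
        add_zero, add_sub_cancel]

lemma orthCompl_graph (hP : IsUnit P.det) (hanti : Pᵀ * a.G * P = -a.G) :
    orthCompl (orthSum a a) (graph a P) = graph a P := by
  ext x
  obtain ⟨u, v, rfl⟩ := exists_append_eq x
  have hinj : Function.Injective (Pᵀ * a.G).mulVec := mulVec_injective_of_isUnit <| by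
    rw [isUnit_iff_isUnit_det, det_mul, det_transpose]
    exact hP.mul a.nondeg
  have hpair (w : Fin a.m → ZMod 4) :
      pair (orthSum a a) (Fin.append u v) (Fin.append w (P *ᵥ w)) =
        (Pᵀ * a.G) *ᵥ (v - P *ᵥ u) ⬝ᵥ w := by
    have hGu : a.G *ᵥ u = -((Pᵀ * a.G) *ᵥ (P *ᵥ u)) := by
      rw [mulVec_mulVec, hanti, neg_mulVec, neg_neg]
    rw [pair_orthSum_append, pair_eq_mulVec_dotProduct, pair_eq_mulVec_dotProduct,
      dotProduct_mulVec, ← mulVec_transpose, mulVec_mulVec, hGu, ← add_dotProduct, mulVec_sub,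
      neg_add_eq_sub]
  change (∀ y ∈ graph a P, _ = 0) ↔ _
  calc (∀ y ∈ graph a P, pair (orthSum a a) (Fin.append u v) y = 0)
      ↔ ∀ w, pair (orthSum a a) (Fin.append u v) (Fin.append w (P *ᵥ w)) = 0 := by
        refine ⟨fun h w => h _ (append_mem_graph_iff.mpr rfl), fun h y hy => ?_⟩
        obtain ⟨w, w', rfl⟩ := exists_append_eq y
        rw [append_mem_graph_iff.mp hy]
        exact h w
    _ ↔ (Pᵀ * a.G) *ᵥ (v - P *ᵥ u) = 0 := by simp only [hpair, dotProduct_eq_zero_iff]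
    _ ↔ v = P *ᵥ u := by rw [← mulVec_zero (Pᵀ * a.G), hinj.eq_iff, sub_eq_zero]
    _ ↔ Fin.append u v ∈ graph a P := append_mem_graph_iff.symm

lemma isSplit_orthSum_self (hP : IsUnit P.det) (hanti : Pᵀ * a.G * P = -a.G) :
    IsSplit (orthSum a a) :=
  ⟨graph a P, ⟨_, isCompl_graph_firstCoordsZero⟩, (orthCompl_graph hP hanti).symm⟩

end Graph

noncomputable def iChar : AddChar (ZMod 4) ℂ := AddChar.zmodChar 4 Complex.I_pow_four

lemma iChar_apply (z : ZMod 4) : iChar z = Complex.I ^ z.val := rfl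

lemma iChar_eq_one_iff {z : ZMod 4} : iChar z = 1 ↔ z = 0 := by
  rw [iChar_apply, ← ZMod.val_eq_zero]
  have hk := ZMod.val_lt z
  generalize z.val = k at hk ⊢
  interval_cases k <;> norm_num [Complex.ext_iff, pow_succ]

lemma exists_pos_quadraticGaussSum_iChar_eq_of_isSplit {s : QF} (hs : IsSplit s) :
    ∃ c : ℕ, 0 < c ∧ quadraticGaussSum iChar s.G = c := by
  classical
  obtain ⟨N, ⟨N', hc⟩, hN⟩ := hs
  have mem_N (x) : x ∈ N ↔ ∀ y ∈ N, pair s x y = 0 := SetLike.ext_iff.mp hN x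
  let ψ (x : Fin s.m → ZMod 4) : AddChar N ℂ := iChar.compAddMonoidHom <|
    AddMonoidHom.mk' (fun n => 2 * pair s x n) fun n n' => by
      simp only [Submodule.coe_add, pair, mulVec_add, dotProduct_add, mul_add]
  have ψ_apply (x) (n : N) : ψ x n = iChar (2 * pair s x n) := rfl
  have sum_shift (x) : ∑ n : N, iChar (pair s (n + x) (n + x)) =
      iChar (pair s x x) * ∑ n, ψ x n := by
    rw [Finset.mul_sum]
    refine Fintype.sum_congr _ _ fun n => ?_
    rw [pair_add_self, (mem_N n).mp n.2 n n.2, zero_add, add_comm, AddChar.map_add_eq_mul,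
      ψ_apply]
  have isotropic_of_trivial (n' : N') (h : ψ n' = 0) : iChar (pair s n' n') = 1 := by
    have h2n' : (2 : ZMod 4) • (n' : Fin s.m → ZMod 4) ∈ N := (mem_N _).mpr fun y hy => by
      rw [pair, smul_dotProduct, smul_eq_mul, ← iChar_eq_one_iff, ← pair, ← ψ_apply _ ⟨y, hy⟩, h,
        AddChar.zero_apply]
    have : (2 : ZMod 4) • (n' : Fin s.m → ZMod 4) = 0 :=
      Submodule.disjoint_def.mp hc.disjoint _ h2n' (N'.smul_mem 2 n'.2)
    rw [pair_self_eq_zero_of_two_smul_eq_zero s this, AddChar.map_zero_eq_one]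
  refine ⟨∑ n' : N', if ψ n' = 0 then Fintype.card N else 0, ?_, ?_⟩
  · have hψ0 : ψ 0 = 0 := by
      ext n
      simp [ψ, pair]
    refine lt_of_lt_of_le ?_ (Finset.single_le_sum (fun _ _ => Nat.zero_le _) (Finset.mem_univ 0))
    rw [Submodule.coe_zero, if_pos hψ0]
    exact Fintype.card_pos
  · rw [quadraticGaussSum, Submodule.sum_eq_sum_sum_of_isCompl hc, Nat.cast_sum]
    refine Fintype.sum_congr _ _ fun n' => ?_
    change ∑ n : N, iChar (pair s (n + n') (n + n')) = _
    rw [sum_shift, AddChar.sum_eq_ite]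
    split_ifs with h
    · rw [isotropic_of_trivial n' h, one_mul]
    · rw [mul_zero, Nat.cast_zero]

lemma quadraticGaussSum_zeroForm {S : Type*} [CommRing S] (ψ : AddChar (ZMod 4) S) :
    quadraticGaussSum ψ zeroForm.G = 1 :=
  quadraticGaussSum_of_isEmpty (ι := Fin 0) ψ _

lemma quadraticGaussSum_iChar_omegaForm : quadraticGaussSum iChar omegaForm.G = -8 := by
  have huniv : (Finset.univ : Finset (ZMod 4)) = {0, 1, 2, 3} := by decide
  change ∑ x : Fin 2 → ZMod 4, iChar (x ⬝ᵥ !![2, 1; 1, 2] *ᵥ x) = -8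
  rw [← (piFinTwoEquiv fun _ => ZMod 4).symm.sum_comp, Fintype.sum_prod_type, huniv]
  simp +decide [iChar_apply, dotProduct, mulVec, Fin.sum_univ_two]
  norm_num [ZMod.val_ofNat, Complex.I_sq]

lemma isSplit_zeroForm : IsSplit zeroForm :=
  ⟨⊥, ⟨⊤, isCompl_bot_top⟩, Subsingleton.elim (α := Submodule (ZMod 4) (Fin 0 → ZMod 4)) _ _⟩

lemma isSplit_orthSum_omegaForm_self : IsSplit (orthSum omegaForm omegaForm) :=
  isSplit_orthSum_self (P := !![1, 0; 0, -1]) (IsUnit.of_mul_eq_one (-1) (by decide)) (by decide)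

lemma isometric_orthSum_omegaForm_zeroForm_comm :
    Isometric (orthSum (orthSum omegaForm omegaForm) zeroForm)
      (orthSum zeroForm (orthSum omegaForm omegaForm)) :=
  ⟨rfl, 1, by simp, by rw [transpose_one, mul_one, one_mul]; decide⟩

/-- The form `ω` with matrix `((2,1),(1,2))` over `Z/4Z` is nondegenerate with
determinant `3`, has trivial discriminant in `(Z/4Z)*/((Z/4Z)*)²`, and represents
a nonzero element of order 2 in the Witt ring `W(Z/4Z)`. -/
theorem omega_nonzero_order_two :
    omegaForm.G.det = 3 ∧
    IsUnit omegaForm.G.det ∧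
    (∃ v : ZMod 4, IsUnit v ∧ (-1 : ZMod 4) * omegaForm.G.det = v ^ 2) ∧
    ¬ WittEquiv omegaForm zeroForm ∧
    WittEquiv (orthSum omegaForm omegaForm) zeroForm := by
  refine ⟨by decide, omegaForm.nondeg, ⟨1, isUnit_one, by decide⟩, ?_,
    ⟨zeroForm, _, isSplit_zeroForm, isSplit_orthSum_omegaForm_self,
      isometric_orthSum_omegaForm_zeroForm_comm⟩⟩
  rintro ⟨s, t, hs, ht, hiso⟩
  obtain ⟨cs, hcs, hs⟩ := exists_pos_quadraticGaussSum_iChar_eq_of_isSplit hs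
  obtain ⟨ct, -, ht⟩ := exists_pos_quadraticGaussSum_iChar_eq_of_isSplit ht
  have h := quadraticGaussSum_eq_of_isometric iChar hiso
  rw [quadraticGaussSum_orthSum, quadraticGaussSum_orthSum, quadraticGaussSum_iChar_omegaForm,
    quadraticGaussSum_zeroForm, hs, ht] at h
  have hcast : ((8 * cs + ct : ℕ) : ℂ) = 0 := by
    push_cast
    linear_combination -h
  have : 8 * cs + ct = 0 := by exact_mod_cast hcast
  omega

end WittZ4
end

section
/- The rank-two symmetric bilinear form ω on (Z/4Z)² with matrix ((2,1),(1,2)) is not split: there is no split form σ such that ω ⊕ σ is split. Equivalently, for any n, the form ω ⊕ H_n (where H_n is the split form of rank 2n) contains no totally isotropic direct summand of rank n+1. -/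
open Matrix

/-!
The Gauss sum `γ(a) = ∑ₓ i ^ a(x, x) ∈ ℤ[i]` is multiplicative on orthogonal sums. If `N = N^⊥` has
a complement `N'`, split the sum into the cosets `z + N`, `z ∈ N'`: on such a coset
`a(y + z, y + z) = a(z, z) + 2 a(y, z)`, so the coset contributes `i ^ a(z, z)` times a character
sum over `N`. That sum vanishes unless `2z ∈ N^⊥ = N`, i.e. `2z = 0`, and then `z ∈ 2L` is
isotropic. Hence the Gauss sum of a split form is a positive integer, while `γ(ω) = -8`.
-/

namespace WittZ4

open LinearMap (BilinForm)

def gaussChar : AddChar (ZMod 4) GaussianInt where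
  toFun q := ⟨0, 1⟩ ^ q.val
  map_zero_eq_one' := rfl
  map_add_eq_mul' := by decide

lemma gaussChar_eq_one_iff : ∀ q : ZMod 4, gaussChar q = 1 ↔ q = 0 := by decide

section Lagrangian

variable {ι : Type*}

/- Over a non-free `ZMod 4`-module such as `ZMod 2` this fails, which is why the section works in
`ι → ZMod 4` rather than in an arbitrary module. -/
lemma exists_eq_two_smul_of_two_smul_eq_zero {z : ι → ZMod 4} (h : (2 : ZMod 4) • z = 0) :
    ∃ w : ι → ZMod 4, z = (2 : ZMod 4) • w := by
  have half : ∀ c : ZMod 4, 2 * c = 0 → ∃ d, c = 2 * d := by decide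
  choose w hw using fun i => half (z i) (congrFun h i)
  exact ⟨w, funext hw⟩

lemma apply_self_eq_zero_of_two_smul_eq_zero (B : BilinForm (ZMod 4) (ι → ZMod 4))
    {z : ι → ZMod 4} (h : (2 : ZMod 4) • z = 0) : B z z = 0 := by
  obtain ⟨w, rfl⟩ := exists_eq_two_smul_of_two_smul_eq_zero h
  simp only [map_smul, LinearMap.smul_apply, smul_eq_mul, ← mul_assoc]
  rw [show (2 : ZMod 4) * 2 = 0 by decide, zero_mul]

/- The sum of `gaussChar (B x x)` over a coset `z + N` of a Lagrangian `N` is `gaussChar (B z z)`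
times the sum of this character. -/
def doubledChar (B : BilinForm (ZMod 4) (ι → ZMod 4)) (N : Submodule (ZMod 4) (ι → ZMod 4))
    (z : ι → ZMod 4) : AddChar N GaussianInt :=
  gaussChar.compAddMonoidHom ((B.flip ((2 : ZMod 4) • z)).domRestrict N).toAddMonoidHom

variable {B : BilinForm (ZMod 4) (ι → ZMod 4)} {N N' : Submodule (ZMod 4) (ι → ZMod 4)}

lemma doubledChar_apply (z : ι → ZMod 4) (y : N) :
    doubledChar B N z y = gaussChar (B y ((2 : ZMod 4) • z)) := rfl

lemma doubledChar_eq_zero_iff (z : ι → ZMod 4) :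
    doubledChar B N z = 0 ↔ (2 : ZMod 4) • z ∈ N.orthogonalBilin B := by
  simp [AddChar.eq_zero_iff, doubledChar_apply, gaussChar_eq_one_iff]

lemma two_smul_eq_zero_of_doubledChar_eq_zero (hc : IsCompl N N')
    (hN : N = N.orthogonalBilin B) {z : ι → ZMod 4} (hz : z ∈ N')
    (h : doubledChar B N z = 0) : (2 : ZMod 4) • z = 0 := by
  rw [doubledChar_eq_zero_iff, ← hN] at h
  exact (Submodule.disjoint_def.mp hc.disjoint) _ h (N'.smul_mem _ hz)

lemma apply_add_self_eq (hB : B.IsSymm) (hN : N = N.orthogonalBilin B) {y z : ι → ZMod 4}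
    (hy : y ∈ N) : B (y + z) (y + z) = B z z + B y ((2 : ZMod 4) • z) := by
  have hyy : B y y = 0 := (hN ▸ hy : y ∈ N.orthogonalBilin B) y hy
  simp only [map_add, LinearMap.add_apply, hyy, hB.eq z y, two_smul]
  ring

open Classical in
lemma sum_gaussChar_apply_add_self [Fintype N] (hB : B.IsSymm) (hc : IsCompl N N')
    (hN : N = N.orthogonalBilin B) (z : N') :
    ∑ y : N, gaussChar (B (y + z) (y + z)) =
      if doubledChar B N z = 0 then (Fintype.card N : GaussianInt) else 0 := by
  simp_rw [apply_add_self_eq hB hN (Subtype.prop _), AddChar.map_add_eq_mul, ← Finset.mul_sum,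
    ← doubledChar_apply, AddChar.sum_eq_ite]
  split_ifs with h
  · rw [apply_self_eq_zero_of_two_smul_eq_zero B
      (two_smul_eq_zero_of_doubledChar_eq_zero hc hN z.2 h), AddChar.map_zero_eq_one, one_mul]
  · rw [mul_zero]

lemma exists_sum_gaussChar_eq_natCast [Fintype ι] [DecidableEq ι] (hB : B.IsSymm)
    (hc : IsCompl N N') (hN : N = N.orthogonalBilin B) :
    ∃ k : ℕ, 0 < k ∧ ∑ x, gaussChar (B x x) = k := by
  classical
  refine ⟨∑ z : N', if doubledChar B N z = 0 then Fintype.card N else 0, ?_, ?_⟩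
  · refine lt_of_lt_of_le ?_ (Finset.single_le_sum (fun _ _ => Nat.zero_le _)
      (Finset.mem_univ (0 : N')))
    rw [if_pos ((doubledChar_eq_zero_iff _).2 (by simp))]
    exact Fintype.card_pos
  · calc ∑ x, gaussChar (B x x)
        = ∑ z : N', ∑ y : N, gaussChar (B (y + z) (y + z)) := by
          rw [← (Submodule.prodEquivOfIsCompl N N' hc).toEquiv.sum_comp, Fintype.sum_prod_type,
            Finset.sum_comm]
          rfl
      _ = _ := by
          simp_rw [sum_gaussChar_apply_add_self hB hc hN]
          push_cast
          rfl

end Lagrangian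

def bilin (a : QF) : BilinForm (ZMod 4) (Fin a.m → ZMod 4) :=
  Matrix.toLinearMap₂' (ZMod 4) a.G

lemma bilin_apply (a : QF) (x y : Fin a.m → ZMod 4) : bilin a x y = pair a x y :=
  Matrix.toLinearMap₂'_apply' a.G x y

lemma isSymm_bilin (a : QF) : (bilin a).IsSymm := by
  refine ⟨fun x y => ?_⟩
  rw [bilin_apply, bilin_apply, pair, pair, dotProduct_mulVec, ← mulVec_transpose, a.symm.eq,
    dotProduct_comm]

lemma orthCompl_eq_orthogonalBilin (a : QF) (N : Submodule (ZMod 4) (Fin a.m → ZMod 4)) :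
    orthCompl a N = N.orthogonalBilin (bilin a) := by
  ext x
  simp only [Submodule.mem_orthogonalBilin_iff, (isSymm_bilin a).eq _ x, bilin_apply]
  rfl

def gaussSum (a : QF) : GaussianInt := ∑ x, gaussChar (pair a x x)

lemma IsSplit.exists_gaussSum_eq_natCast {a : QF} (h : IsSplit a) :
    ∃ k : ℕ, 0 < k ∧ gaussSum a = k := by
  obtain ⟨N, ⟨N', hc⟩, hN⟩ := h
  rw [orthCompl_eq_orthogonalBilin] at hN
  simpa only [gaussSum, bilin_apply] using
    exists_sum_gaussChar_eq_natCast (isSymm_bilin a) hc hN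

lemma pair_orthSum (a b : QF) (u u' : Fin a.m → ZMod 4) (v v' : Fin b.m → ZMod 4) :
    pair (orthSum a b) (Sum.elim u v ∘ finSumFinEquiv.symm)
      (Sum.elim u' v' ∘ finSumFinEquiv.symm) = pair a u u' + pair b v v' := by
  change (u ⊕ᵥ v) ∘ finSumFinEquiv.symm ⬝ᵥ
      reindex finSumFinEquiv finSumFinEquiv (fromBlocks a.G 0 0 b.G) *ᵥ
        ((u' ⊕ᵥ v') ∘ finSumFinEquiv.symm) = _
  rw [reindex_apply, submatrix_mulVec_equiv, comp_equiv_symm_dotProduct]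
  simp [Function.comp_assoc, fromBlocks_mulVec, sumElim_dotProduct_sumElim, pair]

lemma gaussSum_orthSum (a b : QF) : gaussSum (orthSum a b) = gaussSum a * gaussSum b := by
  let e : (Fin a.m → ZMod 4) × (Fin b.m → ZMod 4) ≃ (Fin (orthSum a b).m → ZMod 4) :=
    (Equiv.sumArrowEquivProdArrow _ _ _).symm.trans (finSumFinEquiv.arrowCongr (Equiv.refl _))
  rw [gaussSum, ← e.sum_comp, Fintype.sum_prod_type, gaussSum, gaussSum, Finset.sum_mul_sum]
  refine Finset.sum_congr rfl fun u _ => Finset.sum_congr rfl fun v _ => ?_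
  rw [← AddChar.map_add_eq_mul, ← pair_orthSum]
  rfl

lemma gaussSum_omegaForm : gaussSum omegaForm = -8 := by decide +kernel

/-- The rank-two form `ω = ((2,1),(1,2))` over `Z/4Z` is not split, and there is
no split form `σ` such that `ω ⊕ σ` is split. -/
theorem omega_not_stably_split :
    ¬ IsSplit omegaForm ∧
    ∀ σ : QF, IsSplit σ → ¬ IsSplit (orthSum omegaForm σ) := by
  refine ⟨fun hω => ?_, fun σ hσ hωσ => ?_⟩
  · obtain ⟨k, -, hk⟩ := hω.exists_gaussSum_eq_natCast
    rw [gaussSum_omegaForm] at hk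
    have hre := congrArg Zsqrtd.re hk
    simp at hre
  · obtain ⟨k, -, hωσk⟩ := hωσ.exists_gaussSum_eq_natCast
    obtain ⟨l, hl, hσl⟩ := hσ.exists_gaussSum_eq_natCast
    rw [gaussSum_orthSum, gaussSum_omegaForm, hσl] at hωσk
    have hre := congrArg Zsqrtd.re hωσk
    simp at hre
    omega

end WittZ4
end

section
/- For the symplectic group over a commutative ring, conjugation of the elementary symplectic matrix U_{jj}(q) = ((1_g, q e_{jj}),(0, 1_g)) by A_{ij} = ((1_g - e_{ij}, 0),(0, 1_g + e_{ji})) yields A_{ij} U_{jj}(q) A_{ij}⁻¹ = U_{ii}(q) U_{jj}(q) U_{ij}(q)⁻¹, where U_{ii}(q) = ((1_g, q e_{ii}),(0,1_g)) and U_{ij}(q) = ((1_g, q(e_{ij}+e_{ji})),(0,1_g)). -/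
open Matrix

/-!
Write `U(B) = ((1, B), (0, 1))`. These matrices multiply by `U(B) U(C) = U(B + C)`, and a block
diagonal matrix `diag(P, Q)` conjugates `U(B)` into `U(P B Q⁻¹)`. For `A_{ij}` we have
`P = 1 - e_{ij}` and `Q⁻¹ = 1 - e_{ji} = Pᵀ`, so the conjugate of `U_{jj}(q)` is `U(q v vᵀ)` for the
`j`-th column `v = e_j - e_i` of `P`, that is `U(q (e_{ii} + e_{jj} - e_{ij} - e_{ji}))`, which is
`U_{ii}(q) U_{jj}(q) U_{ij}(q)⁻¹`.
-/

theorem one_sub_mul_one_add_of_mul_self_eq_zero {α : Type*} [Ring α] {N : α} (h : N * N = 0) :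
    (1 - N) * (1 + N) = 1 := by
  rw [← (Commute.one_left N).mul_self_sub_mul_self_eq', h, mul_one, sub_zero]

theorem one_add_mul_one_sub_of_mul_self_eq_zero {α : Type*} [Ring α] {N : α} (h : N * N = 0) :
    (1 + N) * (1 - N) = 1 := by
  rw [← (Commute.one_left N).mul_self_sub_mul_self_eq, h, mul_one, sub_zero]

namespace Matrix

section UnipotentBlocks

variable {m n R : Type*} [Fintype m] [Fintype n] [DecidableEq m] [DecidableEq n] [CommRing R]

theorem fromBlocks_one_mul_fromBlocks_one (B C : Matrix m n R) :
    (fromBlocks 1 B 0 1 : Matrix (m ⊕ n) (m ⊕ n) R) * fromBlocks 1 C 0 1 =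
      fromBlocks 1 (B + C) 0 1 := by
  simp [fromBlocks_multiply, add_comm]

theorem inv_fromBlocks_one (B : Matrix m n R) :
    (fromBlocks 1 B 0 1 : Matrix (m ⊕ n) (m ⊕ n) R)⁻¹ = fromBlocks 1 (-B) 0 1 :=
  inv_eq_right_inv <| by rw [fromBlocks_one_mul_fromBlocks_one, add_neg_cancel, fromBlocks_one]

theorem fromBlocks_diagonal_conj_fromBlocks_one {P P' : Matrix m m R} {Q Q' : Matrix n n R}
    (hP : P * P' = 1) (hQ : Q * Q' = 1) (B : Matrix m n R) :
    fromBlocks P 0 0 Q * fromBlocks 1 B 0 1 * (fromBlocks P 0 0 Q)⁻¹ =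
      fromBlocks 1 (P * B * Q') 0 1 := by
  have hinv : (fromBlocks P 0 0 Q)⁻¹ = fromBlocks P' 0 0 Q' :=
    inv_eq_right_inv <| by simp [fromBlocks_multiply, hP, hQ]
  simp [hinv, fromBlocks_multiply, hP, hQ]

end UnipotentBlocks

variable {n R : Type*} [Fintype n] [DecidableEq n] [CommRing R]

theorem single_mul_single_self_of_ne {i j : n} (hij : i ≠ j) (c : R) :
    single i j c * single i j c = 0 :=
  single_mul_single_of_ne (c := c) i j i hij.symm c

theorem one_sub_single_mul_single_mul_one_sub_single (i j : n) (c : R) :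
    (1 - single i j 1) * single j j c * (1 - single j i 1) =
      single i i c + single j j c - (single i j c + single j i c) := by
  simp only [sub_mul, one_mul, single_mul_single_same, mul_sub, mul_one]
  abel

end Matrix

theorem conj_Ujj_relation_general (R : Type*) [CommRing R] (g : ℕ)
    (i j : Fin g) (hij : i ≠ j) (q : R) :
    let e : Fin g → Fin g → Matrix (Fin g) (Fin g) R :=
      fun a b => Matrix.single a b 1
    let Uij : Matrix (Fin g ⊕ Fin g) (Fin g ⊕ Fin g) R :=
      Matrix.fromBlocks 1 (q • (e i j + e j i)) 0 1
    let Uii : Matrix (Fin g ⊕ Fin g) (Fin g ⊕ Fin g) R :=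
      Matrix.fromBlocks 1 (q • e i i) 0 1
    let Ujj : Matrix (Fin g ⊕ Fin g) (Fin g ⊕ Fin g) R :=
      Matrix.fromBlocks 1 (q • e j j) 0 1
    let A : Matrix (Fin g ⊕ Fin g) (Fin g ⊕ Fin g) R :=
      Matrix.fromBlocks (1 - e i j) 0 0 (1 + e j i)
    A * Ujj * A⁻¹ = Uii * Ujj * Uij⁻¹ := by
  intro e Uij Uii Ujj A
  have hP : (1 - e i j) * (1 + e i j) = 1 :=
    one_sub_mul_one_add_of_mul_self_eq_zero (single_mul_single_self_of_ne hij 1)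
  have hQ : (1 + e j i) * (1 - e j i) = 1 :=
    one_add_mul_one_sub_of_mul_self_eq_zero (single_mul_single_self_of_ne hij.symm 1)
  calc A * Ujj * A⁻¹ = fromBlocks 1 ((1 - e i j) * (q • e j j) * (1 - e j i)) 0 1 :=
        fromBlocks_diagonal_conj_fromBlocks_one hP hQ _
    _ = fromBlocks 1 (q • e i i + q • e j j + -(q • (e i j + e j i))) 0 1 := by
        simp only [e, smul_single, smul_eq_mul, mul_one,
          one_sub_single_mul_single_mul_one_sub_single, smul_add]
        abel_nf
    _ = Uii * Ujj * Uij⁻¹ := by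
        rw [inv_fromBlocks_one, fromBlocks_one_mul_fromBlocks_one, fromBlocks_one_mul_fromBlocks_one]

/-- Conjugating the elementary symplectic matrix `U_{jj}(q)` by
`A_{ij} = ((1 - e_{ij}, 0),(0, 1 + e_{ji}))` gives
`A_{ij} U_{jj}(q) A_{ij}⁻¹ = U_{ii}(q) U_{jj}(q) U_{ij}(q)⁻¹`. -/
theorem conj_Ujj_relation (R : Type*) [CommRing R] (g : ℕ) (hg : 2 ≤ g)
    (i j : Fin g) (hij : i ≠ j) (q : R) :
    let e : Fin g → Fin g → Matrix (Fin g) (Fin g) R :=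
      fun a b => Matrix.single a b 1
    let Uij : Matrix (Fin g ⊕ Fin g) (Fin g ⊕ Fin g) R :=
      Matrix.fromBlocks 1 (q • (e i j + e j i)) 0 1
    let Uii : Matrix (Fin g ⊕ Fin g) (Fin g ⊕ Fin g) R :=
      Matrix.fromBlocks 1 (q • e i i) 0 1
    let Ujj : Matrix (Fin g ⊕ Fin g) (Fin g ⊕ Fin g) R :=
      Matrix.fromBlocks 1 (q • e j j) 0 1
    let A : Matrix (Fin g ⊕ Fin g) (Fin g ⊕ Fin g) R :=
      Matrix.fromBlocks (1 - e i j) 0 0 (1 + e j i)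
    A * Ujj * A⁻¹ = Uii * Ujj * Uij⁻¹ :=
  conj_Ujj_relation_general R g i j hij q
end
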